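/- arXiv:0906.3159 — 6 statements merged into one kernel-verified Lean document; each statement's English description precedes it below -/
import Mathlib

section
/- Let f, g, h, k be self-maps of a metric space (X,d) such that the pairs (f,h) and (g,k) are each subcompatible and subsequentially continuous with a common witnessing sequence. Suppose there is α ∈ (0,1) such that for all x, y ∈ X: d(fx,gy) ≤ α · max{ d(hx,ky), d(hx,fx), d(gy,ky), (d(hx,gy)+d(ky,fx))/2 }. Then f, g, h and k have a unique common fixed point. -/
/-!
Subcompatibility together with subsequential continuity makes the common limit `t` of a witnessing
sequence a coincidence point, `f t = h t`; likewise `g u = k u`. The contractive condition passes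
to limits: if `f` and `h` along one filter tend to `a` while `g` and `k` along another tend to `b`,
it degenerates to `d(a, b) ≤ α d(a, b)`, so `a = b`. Feeding it the witnessing sequences and
constant sequences identifies `t`, `u`, `f t` and `g u`, and also gives uniqueness.
-/

open Filter Topology NNReal

/-- The pair `(f, g)` of self-maps of a metric space is subcompatible and
subsequentially continuous with a common witnessing sequence: there is a
sequence `x` and a point `t` with `lim f xₙ = lim g xₙ = t`,
`lim d(f (g xₙ), g (f xₙ)) = 0`, `lim f (g xₙ) = f t` and `lim g (f xₙ) = g t`. -/
def SubcompSubseqCont {X : Type*} [MetricSpace X] (f g : X → X) : Prop :=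
  ∃ (x : ℕ → X) (t : X),
    Tendsto (fun n => f (x n)) atTop (𝓝 t) ∧
    Tendsto (fun n => g (x n)) atTop (𝓝 t) ∧
    Tendsto (fun n => dist (f (g (x n))) (g (f (x n)))) atTop (𝓝 (0 : ℝ)) ∧
    Tendsto (fun n => f (g (x n))) atTop (𝓝 (f t)) ∧
    Tendsto (fun n => g (f (x n))) atTop (𝓝 (g t))

section

variable {X : Type*} [MetricSpace X]

theorem SubcompSubseqCont.exists_coincidence {f g : X → X} (hfg : SubcompSubseqCont f g) :
    ∃ (x : ℕ → X) (t : X), Tendsto (fun n => f (x n)) atTop (𝓝 t) ∧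
      Tendsto (fun n => g (x n)) atTop (𝓝 t) ∧ g t = f t := by
  obtain ⟨x, t, hfx, hgx, hcomm, hfgx, hgfx⟩ := hfg
  refine ⟨x, t, hfx, hgx, (dist_eq_zero.1 ?_).symm⟩
  exact tendsto_nhds_unique (hfgx.dist hgfx) hcomm

def MaxContractive (f g h k : X → X) (α : ℝ) : Prop :=
  ∀ x y : X, dist (f x) (g y) ≤ α * max (max (max (dist (h x) (k y)) (dist (h x) (f x)))
    (dist (g y) (k y))) ((dist (h x) (g y) + dist (k y) (f x)) / 2)

namespace MaxContractive

variable {f g h k : X → X} {α : ℝ}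

theorem eq_of_tendsto (hcon : MaxContractive f g h k α) (hα1 : α < 1)
    {ι κ : Type*} {l : Filter ι} {m : Filter κ} [l.NeBot] [m.NeBot] {x : ι → X} {y : κ → X}
    {a b : X} (hfx : Tendsto (fun i => f (x i)) l (𝓝 a)) (hhx : Tendsto (fun i => h (x i)) l (𝓝 a))
    (hgy : Tendsto (fun j => g (y j)) m (𝓝 b)) (hky : Tendsto (fun j => k (y j)) m (𝓝 b)) :
    a = b := by
  have lim_fst {z : X} {u : ι → X} (hu : Tendsto u l (𝓝 z)) :
      Tendsto (fun p : ι × κ => u p.1) (l ×ˢ m) (𝓝 z) := hu.comp tendsto_fst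
  have lim_snd {z : X} {v : κ → X} (hv : Tendsto v m (𝓝 z)) :
      Tendsto (fun p : ι × κ => v p.2) (l ×ˢ m) (𝓝 z) := hv.comp tendsto_snd
  have hhk := (lim_fst hhx).dist (lim_snd hky)
  have hhf := (lim_fst hhx).dist (lim_fst hfx)
  have hgk := (lim_snd hgy).dist (lim_snd hky)
  have hhg := (lim_fst hhx).dist (lim_snd hgy)
  have hkf := (lim_snd hky).dist (lim_fst hfx)
  have hbound := (((hhk.max hhf).max hgk).max ((hhg.add hkf).div_const 2)).const_mul α
  have hle : dist a b ≤ α * dist a b := by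
    have hlim := le_of_tendsto_of_tendsto' ((lim_fst hfx).dist (lim_snd hgy)) hbound
      fun p => hcon (x p.1) (y p.2)
    rwa [dist_comm b a, add_self_div_two, dist_self, dist_self,
      max_eq_left dist_nonneg, max_eq_left dist_nonneg, max_self] at hlim
  exact dist_le_zero.1 (by nlinarith [dist_nonneg (x := a) (y := b)])

theorem eq_of_coincidence (hcon : MaxContractive f g h k α) (hα1 : α < 1) {p q : X}
    (hp : h p = f p) (hq : k q = g q) : f p = g q :=
  hcon.eq_of_tendsto hα1 (l := ⊤) (m := ⊤) (x := fun _ : Unit => p) (y := fun _ : Unit => q)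
    tendsto_const_nhds (hp ▸ tendsto_const_nhds) tendsto_const_nhds (hq ▸ tendsto_const_nhds)

end MaxContractive

end

theorem common_fixed_point_contractive_max_general {X : Type*} [MetricSpace X]
    (f g h k : X → X)
    (hfh : SubcompSubseqCont f h) (hgk : SubcompSubseqCont g k)
    (α : ℝ) (hα1 : α < 1)
    (hineq : ∀ x y : X,
      dist (f x) (g y) ≤ α * max (max (max (dist (h x) (k y)) (dist (h x) (f x)))
        (dist (g y) (k y))) ((dist (h x) (g y) + dist (k y) (f x)) / 2)) :
    ∃! t : X, f t = t ∧ g t = t ∧ h t = t ∧ k t = t := by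
  have hcon : MaxContractive f g h k α := hineq
  obtain ⟨x, t, hfx, hhx, hht⟩ := hfh.exists_coincidence
  obtain ⟨y, u, hgy, hky, hku⟩ := hgk.exists_coincidence
  have hftu : f t = u := hcon.eq_of_tendsto hα1 (x := fun _ : Unit => t) (l := ⊤)
    tendsto_const_nhds (hht ▸ tendsto_const_nhds) hgy hky
  have htgu : t = g u := hcon.eq_of_tendsto hα1 (y := fun _ : Unit => u) (m := ⊤)
    hfx hhx tendsto_const_nhds (hku ▸ tendsto_const_nhds)
  have htu : t = u := htgu.trans ((hcon.eq_of_coincidence hα1 hht hku).symm.trans hftu)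
  subst htu
  refine ⟨t, ⟨hftu, htgu.symm, hht.trans hftu, hku.trans htgu.symm⟩, ?_⟩
  rintro s ⟨-, hgs, -, hks⟩
  rw [← hgs, ← hcon.eq_of_coincidence hα1 hht (hks.trans hgs.symm), hftu]

theorem common_fixed_point_contractive_max {X : Type*} [MetricSpace X]
    (f g h k : X → X)
    (hfh : SubcompSubseqCont f h) (hgk : SubcompSubseqCont g k)
    (α : ℝ) (hα0 : 0 < α) (hα1 : α < 1)
    (hineq : ∀ x y : X,
      dist (f x) (g y) ≤ α * max (max (max (dist (h x) (k y)) (dist (h x) (f x)))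
        (dist (g y) (k y))) ((dist (h x) (g y) + dist (k y) (f x)) / 2)) :
    ∃! t : X, f t = t ∧ g t = t ∧ h t = t ∧ k t = t :=
  common_fixed_point_contractive_max_general f g h k hfh hgk α hα1 hineq
end

section
/- Let f, g, h, k be self-maps of a metric space (X,d) such that the pairs (f,h) and (g,k) are each subcompatible and subsequentially continuous with a common witnessing sequence. Suppose that for all x, y ∈ X: d(fx,gy)³ ≤ ( d(hx,fx)²·d(gy,ky)² + d(hx,gy)²·d(ky,fx)² ) / ( 1 + d(hx,ky) + d(hx,fx) + d(gy,ky) ). Then f, g, h and k have a unique common fixed point. -/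
open Filter Topology NNReal

private lemma key_cubic (D : ℝ) (h0 : 0 ≤ D)
    (h : D ^ 3 ≤ ((0:ℝ) ^ 2 * 0 ^ 2 + D ^ 2 * D ^ 2) / (1 + D + 0 + 0)) : D = 0 := by
  have h1 : (0:ℝ) < 1 + D + 0 + 0 := by linarith
  rw [le_div_iff₀ h1] at h
  have h3 : D ^ 3 ≤ 0 := by nlinarith
  have h4 : D ^ 3 = 0 := le_antisymm h3 (pow_nonneg h0 3)
  exact pow_eq_zero_iff (by norm_num) |>.mp h4

theorem common_fixed_point_cubic_type {X : Type*} [MetricSpace X]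
    (f g h k : X → X)
    (hfh : SubcompSubseqCont f h) (hgk : SubcompSubseqCont g k)
    (hineq : ∀ x y : X,
      dist (f x) (g y) ^ 3 ≤
        (dist (h x) (f x) ^ 2 * dist (g y) (k y) ^ 2 +
          dist (h x) (g y) ^ 2 * dist (k y) (f x) ^ 2) /
        (1 + dist (h x) (k y) + dist (h x) (f x) + dist (g y) (k y))) :
    ∃! t : X, f t = t ∧ g t = t ∧ h t = t ∧ k t = t := by
  obtain ⟨x, t, hx1, hx2, hx3, hx4, hx5⟩ := hfh
  obtain ⟨y, u, hy1, hy2, hy3, hy4, hy5⟩ := hgk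
  -- f t = h t
  have hft2 : h t = f t := by
    have l1 : Tendsto (fun n => dist (f (h (x n))) (h (f (x n)))) atTop
        (𝓝 (dist (f t) (h t))) := hx4.dist hx5
    exact (dist_eq_zero.mp (tendsto_nhds_unique l1 hx3)).symm
  -- g u = k u
  have hgu2 : k u = g u := by
    have l1 : Tendsto (fun n => dist (g (k (y n))) (k (g (y n)))) atTop
        (𝓝 (dist (g u) (k u))) := hy4.dist hy5
    exact (dist_eq_zero.mp (tendsto_nhds_unique l1 hy3)).symm
  have hd_gk : Tendsto (fun n => dist (g (y n)) (k (y n))) atTop (𝓝 (0:ℝ)) := by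
    have := hy1.dist hy2
    simpa using this
  have hd_fh : Tendsto (fun n => dist (h (x n)) (f (x n))) atTop (𝓝 (0:ℝ)) := by
    have := hx2.dist hx1
    simpa using this
  -- f t = u
  have hftu : f t = u := by
    set D := dist (f t) u with hD
    have ineqn : ∀ n, dist (f t) (g (y n)) ^ 3 ≤
        ((0:ℝ) ^ 2 * dist (g (y n)) (k (y n)) ^ 2 +
          dist (f t) (g (y n)) ^ 2 * dist (k (y n)) (f t) ^ 2) /
        (1 + dist (f t) (k (y n)) + 0 + dist (g (y n)) (k (y n))) := by
      intro n
      have := hineq t (y n)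
      simp only [hft2, dist_self] at this
      exact this
    have lhsT : Tendsto (fun n => dist (f t) (g (y n)) ^ 3) atTop (𝓝 (D ^ 3)) :=
      (tendsto_const_nhds.dist hy1).pow 3
    have tg : Tendsto (fun n => dist (f t) (g (y n))) atTop (𝓝 D) :=
      tendsto_const_nhds.dist hy1
    have tk : Tendsto (fun n => dist (k (y n)) (f t)) atTop (𝓝 (dist u (f t))) :=
      hy2.dist tendsto_const_nhds
    have tk' : Tendsto (fun n => dist (f t) (k (y n))) atTop (𝓝 D) :=
      tendsto_const_nhds.dist hy2
    have numT : Tendsto (fun n => (0:ℝ) ^ 2 * dist (g (y n)) (k (y n)) ^ 2 +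
        dist (f t) (g (y n)) ^ 2 * dist (k (y n)) (f t) ^ 2) atTop
        (𝓝 ((0:ℝ) ^ 2 * (0:ℝ) ^ 2 + D ^ 2 * (dist u (f t)) ^ 2)) :=
      (tendsto_const_nhds.mul (hd_gk.pow 2)).add ((tg.pow 2).mul (tk.pow 2))
    have denT : Tendsto (fun n => 1 + dist (f t) (k (y n)) + 0 +
        dist (g (y n)) (k (y n))) atTop (𝓝 (1 + D + 0 + 0)) :=
      ((tendsto_const_nhds.add tk').add tendsto_const_nhds).add hd_gk
    have hne : (1 + D + 0 + 0 : ℝ) ≠ 0 := by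
      have : (0:ℝ) ≤ D := dist_nonneg
      positivity
    have hle := le_of_tendsto_of_tendsto' lhsT (numT.div denT hne) ineqn
    rw [dist_comm u (f t), ← hD] at hle
    exact dist_eq_zero.mp (key_cubic D dist_nonneg hle)
  -- t = g u
  have htgu : t = g u := by
    set E := dist t (g u) with hE
    have ineqn : ∀ n, dist (f (x n)) (g u) ^ 3 ≤
        (dist (h (x n)) (f (x n)) ^ 2 * (0:ℝ) ^ 2 +
          dist (h (x n)) (g u) ^ 2 * dist (g u) (f (x n)) ^ 2) /
        (1 + dist (h (x n)) (g u) + dist (h (x n)) (f (x n)) + 0) := by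
      intro n
      have := hineq (x n) u
      simp only [hgu2, dist_self] at this
      exact this
    have lhsT : Tendsto (fun n => dist (f (x n)) (g u) ^ 3) atTop (𝓝 (E ^ 3)) := by
      have : Tendsto (fun n => dist (f (x n)) (g u)) atTop (𝓝 E) :=
        hx1.dist tendsto_const_nhds
      exact this.pow 3
    have th : Tendsto (fun n => dist (h (x n)) (g u)) atTop (𝓝 E) :=
      hx2.dist tendsto_const_nhds
    have tgf : Tendsto (fun n => dist (g u) (f (x n))) atTop (𝓝 (dist (g u) t)) :=
      tendsto_const_nhds.dist hx1
    have numT : Tendsto (fun n => dist (h (x n)) (f (x n)) ^ 2 * (0:ℝ) ^ 2 +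
        dist (h (x n)) (g u) ^ 2 * dist (g u) (f (x n)) ^ 2) atTop
        (𝓝 ((0:ℝ) ^ 2 * (0:ℝ) ^ 2 + E ^ 2 * (dist (g u) t) ^ 2)) :=
      ((hd_fh.pow 2).mul tendsto_const_nhds).add ((th.pow 2).mul (tgf.pow 2))
    have denT : Tendsto (fun n => 1 + dist (h (x n)) (g u) +
        dist (h (x n)) (f (x n)) + 0) atTop (𝓝 (1 + E + 0 + 0)) :=
      ((tendsto_const_nhds.add th).add hd_fh).add tendsto_const_nhds
    have hne : (1 + E + 0 + 0 : ℝ) ≠ 0 := by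
      have : (0:ℝ) ≤ E := dist_nonneg
      positivity
    have hle := le_of_tendsto_of_tendsto' lhsT (numT.div denT hne) ineqn
    rw [dist_comm (g u) t, ← hE] at hle
    exact dist_eq_zero.mp (key_cubic E dist_nonneg hle)
  -- f t = g u (pointwise)
  have hstep1 : f t = g u := by
    have := hineq t u
    simp only [hft2, hgu2, dist_self] at this
    rw [dist_comm (g u) (f t)] at this
    exact dist_eq_zero.mp (key_cubic (dist (f t) (g u)) dist_nonneg this)
  -- conclude t = u and all fixed point equations
  have htu : t = u := by rw [htgu, ← hstep1, hftu]
  have hgt : g t = t := by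
    rw [htu]
    exact (htu ▸ htgu).symm
  have hkt : k t = t := by
    rw [htu, hgu2]
    exact (htu ▸ htgu).symm
  refine ⟨t, ⟨?_, ?_, ?_, ?_⟩, ?_⟩
  · rw [hftu]; exact htu.symm
  · exact hgt
  · rw [hft2, hftu]; exact htu.symm
  · exact hkt
  · rintro s ⟨hfs, hgs, hhs, hks⟩
    have := hineq s t
    rw [hfs, hhs, hgt, hkt] at this
    simp only [dist_self] at this
    rw [dist_comm t s] at this
    exact dist_eq_zero.mp (key_cubic (dist s t) dist_nonneg this)
end

section
/- Let f, g, h, k be self-maps of a metric space (X,d) such that the pairs (f,h) and (g,k) are each subcompatible and subsequentially continuous with a common witnessing sequence. Let 0 < a < 1, α, β ∈ (0,1], p a positive integer, and F : ℝ₊ → ℝ₊ upper semicontinuous with F(t) < t for every t > 0. Suppose that for all x, y ∈ X: d(fx,gy)^p ≤ F( a·d(hx,ky)^p + (1−a)·max{ α·d(fx,hx)^p, β·d(gy,ky)^p, d(fx,hx)^{p/2}·d(fx,ky)^{p/2}, d(fx,ky)^{p/2}·d(hx,gy)^{p/2}, (d(fx,hx)^p + d(gy,ky)^p)/2 } ),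 where d(·,·)^{p/2} denotes the real power with exponent p/2. Then f, g, h and k have a unique common fixed point. -/
open Filter Topology NNReal

/-- Upper semicontinuity transfers inequalities along limits of sequences. -/
lemma usc_limit_aux {F : ℝ≥0 → ℝ≥0} (hF : UpperSemicontinuous F) {s v : ℝ≥0}
    {sn vn : ℕ → ℝ≥0} (hs : Tendsto sn atTop (𝓝 s)) (hv : Tendsto vn atTop (𝓝 v))
    (hle : ∀ n, vn n ≤ F (sn n)) : v ≤ F s := by
  refine le_of_forall_gt_imp_ge_of_dense fun c hc => ?_
  have h1 : ∀ᶠ n in atTop, F (sn n) < c := hs.eventually (hF s c hc)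
  exact le_of_tendsto hv (h1.mono fun n hn => (hle n).trans hn.le)

lemma key_aux {a : ℝ≥0} (ha1 : a < 1) {F : ℝ≥0 → ℝ≥0}
    (hF : ∀ t : ℝ≥0, 0 < t → F t < t) {p : ℕ} (hp : 0 < p) {D : ℝ≥0}
    (h : D ^ p ≤ F (a * D ^ p + (1 - a) * D ^ p)) : D = 0 := by
  have he : a * D ^ p + (1 - a) * D ^ p = D ^ p := by
    rw [← add_mul, add_tsub_cancel_of_le ha1.le, one_mul]
  rw [he] at h
  by_contra hD
  have hpos : 0 < D ^ p := pow_pos (pos_iff_ne_zero.mpr hD) p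
  exact absurd (h.trans_lt (hF _ hpos)) (lt_irrefl _)

lemma rpow_half_mul_aux {p : ℕ} (hp : 0 < p) (D : ℝ≥0) :
    D ^ ((p : ℝ) / 2) * D ^ ((p : ℝ) / 2) = D ^ p := by
  have hne : (p : ℝ) / 2 + (p : ℝ) / 2 ≠ 0 := by
    have : (0 : ℝ) < p := by exact_mod_cast hp
    positivity
  rw [← NNReal.rpow_add' hne, ← NNReal.rpow_natCast]
  norm_num

theorem common_fixed_point_gregus {X : Type*} [MetricSpace X]
    (f g h k : X → X)
    (hfh : SubcompSubseqCont f h) (hgk : SubcompSubseqCont g k)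
    (a α β : ℝ≥0) (ha0 : 0 < a) (ha1 : a < 1)
    (hα : 0 < α ∧ α ≤ 1) (hβ : 0 < β ∧ β ≤ 1)
    (p : ℕ) (hp : 0 < p)
    (F : ℝ≥0 → ℝ≥0) (hFusc : UpperSemicontinuous F)
    (hF : ∀ t : ℝ≥0, 0 < t → F t < t)
    (hineq : ∀ x y : X,
      nndist (f x) (g y) ^ p ≤
        F (a * nndist (h x) (k y) ^ p + (1 - a) *
          max (max (max (max (α * nndist (f x) (h x) ^ p)
            (β * nndist (g y) (k y) ^ p))
            (nndist (f x) (h x) ^ ((p : ℝ) / 2) * nndist (f x) (k y) ^ ((p : ℝ) / 2)))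
            (nndist (f x) (k y) ^ ((p : ℝ) / 2) * nndist (h x) (g y) ^ ((p : ℝ) / 2)))
            ((nndist (f x) (h x) ^ p + nndist (g y) (k y) ^ p) / 2))) :
    ∃! t : X, f t = t ∧ g t = t ∧ h t = t ∧ k t = t := by
  obtain ⟨x, t, hxf, hxh, hx0, hxfh, hxhf⟩ := hfh
  obtain ⟨y, u, hyg, hyk, hy0, hygk, hykg⟩ := hgk
  -- continuity of rpow with exponent p/2
  have hc : (0 : ℝ) ≤ (p : ℝ) / 2 := by positivity
  have crp : Continuous fun z : ℝ≥0 => z ^ ((p : ℝ) / 2) := NNReal.continuous_rpow_const hc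
  -- Step 1: f t = h t
  have hft : f t = h t := by
    have h1 : Tendsto (fun n => dist (f (h (x n))) (h (f (x n)))) atTop
        (𝓝 (dist (f t) (h t))) := hxfh.dist hxhf
    have := tendsto_nhds_unique h1 hx0
    exact dist_eq_zero.mp this
  -- Step 1': g u = k u
  have hgu : g u = k u := by
    have h1 : Tendsto (fun n => dist (g (k (y n))) (k (g (y n)))) atTop
        (𝓝 (dist (g u) (k u))) := hygk.dist hykg
    exact dist_eq_zero.mp (tendsto_nhds_unique h1 hy0)
  -- A pointwise consequence of the contraction: if h x = f x and k y = g y then f x = g y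
  have point : ∀ x y : X, h x = f x → k y = g y → f x = g y := by
    intro x y hhx hky
    have H := hineq x y
    rw [hhx, hky] at H
    set D := nndist (f x) (g y) with hD
    simp only [nndist_self, zero_pow hp.ne', mul_zero,
      NNReal.zero_rpow (by positivity : (p:ℝ)/2 ≠ 0), zero_mul, zero_add, add_zero,
      zero_div, rpow_half_mul_aux hp, max_self, zero_le', sup_of_le_right, sup_of_le_left] at H
    exact nndist_eq_zero.mp (key_aux ha1 hF hp H)
  -- Step 2: f t = u, using the sequence y with x := t
  have hftu : f t = u := by
    set D := nndist (f t) u with hD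
    -- limits of the individual distances
    have l1 : Tendsto (fun n => nndist (h t) (k (y n))) atTop (𝓝 D) := by
      have : nndist (h t) u = D := by rw [← hft]
      simpa [this] using (tendsto_const_nhds (x := h t)).nndist hyk
    have l2 : Tendsto (fun n => nndist (g (y n)) (k (y n))) atTop (𝓝 0) := by
      simpa using hyg.nndist hyk
    have l3 : Tendsto (fun n => nndist (f t) (k (y n))) atTop (𝓝 D) :=
      (tendsto_const_nhds (x := f t)).nndist hyk
    have l4 : Tendsto (fun n => nndist (h t) (g (y n))) atTop (𝓝 D) := by
      have : nndist (h t) u = D := by rw [← hft]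
      simpa [this] using (tendsto_const_nhds (x := h t)).nndist hyg
    have l0 : Tendsto (fun n => nndist (f t) (g (y n)) ^ p) atTop (𝓝 (D ^ p)) :=
      ((tendsto_const_nhds (x := f t)).nndist hyg).pow p
    have larg : Tendsto (fun n =>
        a * nndist (h t) (k (y n)) ^ p + (1 - a) *
          max (max (max (max (α * nndist (f t) (h t) ^ p)
            (β * nndist (g (y n)) (k (y n)) ^ p))
            (nndist (f t) (h t) ^ ((p : ℝ) / 2) * nndist (f t) (k (y n)) ^ ((p : ℝ) / 2)))
            (nndist (f t) (k (y n)) ^ ((p : ℝ) / 2) * nndist (h t) (g (y n)) ^ ((p : ℝ) / 2)))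
            ((nndist (f t) (h t) ^ p + nndist (g (y n)) (k (y n)) ^ p) / 2)) atTop
        (𝓝 (a * D ^ p + (1 - a) * D ^ p)) := by
      have hmax : Tendsto (fun n =>
          max (max (max (max (α * nndist (f t) (h t) ^ p)
            (β * nndist (g (y n)) (k (y n)) ^ p))
            (nndist (f t) (h t) ^ ((p : ℝ) / 2) * nndist (f t) (k (y n)) ^ ((p : ℝ) / 2)))
            (nndist (f t) (k (y n)) ^ ((p : ℝ) / 2) * nndist (h t) (g (y n)) ^ ((p : ℝ) / 2)))
            ((nndist (f t) (h t) ^ p + nndist (g (y n)) (k (y n)) ^ p) / 2)) atTop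
          (𝓝 (max (max (max (max (α * nndist (f t) (h t) ^ p) (β * 0 ^ p))
            (nndist (f t) (h t) ^ ((p : ℝ) / 2) * D ^ ((p : ℝ) / 2)))
            (D ^ ((p : ℝ) / 2) * D ^ ((p : ℝ) / 2)))
            ((nndist (f t) (h t) ^ p + 0 ^ p) / 2))) := by
        refine Tendsto.max (Tendsto.max (Tendsto.max (Tendsto.max tendsto_const_nhds
          (tendsto_const_nhds.mul (l2.pow p)))
          (tendsto_const_nhds.mul ((crp.tendsto D).comp l3)))
          ((crp.tendsto D).comp l3 |>.mul ((crp.tendsto D).comp l4)))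
          ((tendsto_const_nhds.add (l2.pow p)).div_const 2)
      have hft0 : nndist (f t) (h t) = 0 := by rw [hft, nndist_self]
      have hsimp : max (max (max (max (α * nndist (f t) (h t) ^ p) (β * 0 ^ p))
            (nndist (f t) (h t) ^ ((p : ℝ) / 2) * D ^ ((p : ℝ) / 2)))
            (D ^ ((p : ℝ) / 2) * D ^ ((p : ℝ) / 2)))
            ((nndist (f t) (h t) ^ p + 0 ^ p) / 2) = D ^ p := by
        rw [hft0, rpow_half_mul_aux hp]
        simp [zero_pow hp.ne', NNReal.zero_rpow (by positivity : (p:ℝ)/2 ≠ 0)]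
      rw [hsimp] at hmax
      exact (tendsto_const_nhds.mul (l1.pow p)).add (tendsto_const_nhds.mul hmax)
    have H : D ^ p ≤ F (a * D ^ p + (1 - a) * D ^ p) :=
      usc_limit_aux hFusc larg l0 fun n => hineq t (y n)
    exact nndist_eq_zero.mp (key_aux ha1 hF hp H)
  -- Step 3: t = g u, using the sequence x with y := u
  have htgu : t = g u := by
    set D := nndist t (g u) with hD
    have hku : nndist t (k u) = D := by rw [← hgu]
    have l1 : Tendsto (fun n => nndist (h (x n)) (k u)) atTop (𝓝 D) := by
      simpa [hku] using hxh.nndist (tendsto_const_nhds (x := k u))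
    have l2 : Tendsto (fun n => nndist (f (x n)) (h (x n))) atTop (𝓝 0) := by
      simpa using hxf.nndist hxh
    have l3 : Tendsto (fun n => nndist (f (x n)) (k u)) atTop (𝓝 D) := by
      simpa [hku] using hxf.nndist (tendsto_const_nhds (x := k u))
    have l4 : Tendsto (fun n => nndist (h (x n)) (g u)) atTop (𝓝 D) := by
      simpa using hxh.nndist (tendsto_const_nhds (x := g u))
    have l0 : Tendsto (fun n => nndist (f (x n)) (g u) ^ p) atTop (𝓝 (D ^ p)) := by
      exact (hxf.nndist (tendsto_const_nhds (x := g u))).pow p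
    have larg : Tendsto (fun n =>
        a * nndist (h (x n)) (k u) ^ p + (1 - a) *
          max (max (max (max (α * nndist (f (x n)) (h (x n)) ^ p)
            (β * nndist (g u) (k u) ^ p))
            (nndist (f (x n)) (h (x n)) ^ ((p : ℝ) / 2) * nndist (f (x n)) (k u) ^ ((p : ℝ) / 2)))
            (nndist (f (x n)) (k u) ^ ((p : ℝ) / 2) * nndist (h (x n)) (g u) ^ ((p : ℝ) / 2)))
            ((nndist (f (x n)) (h (x n)) ^ p + nndist (g u) (k u) ^ p) / 2)) atTop
        (𝓝 (a * D ^ p + (1 - a) * D ^ p)) := by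
      have hmax : Tendsto (fun n =>
          max (max (max (max (α * nndist (f (x n)) (h (x n)) ^ p)
            (β * nndist (g u) (k u) ^ p))
            (nndist (f (x n)) (h (x n)) ^ ((p : ℝ) / 2) * nndist (f (x n)) (k u) ^ ((p : ℝ) / 2)))
            (nndist (f (x n)) (k u) ^ ((p : ℝ) / 2) * nndist (h (x n)) (g u) ^ ((p : ℝ) / 2)))
            ((nndist (f (x n)) (h (x n)) ^ p + nndist (g u) (k u) ^ p) / 2)) atTop
          (𝓝 (max (max (max (max (α * 0 ^ p) (β * nndist (g u) (k u) ^ p))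
            ((0 : ℝ≥0) ^ ((p : ℝ) / 2) * D ^ ((p : ℝ) / 2)))
            (D ^ ((p : ℝ) / 2) * D ^ ((p : ℝ) / 2)))
            ((0 ^ p + nndist (g u) (k u) ^ p) / 2))) := by
        refine Tendsto.max (Tendsto.max (Tendsto.max (Tendsto.max
          (tendsto_const_nhds.mul (l2.pow p)) tendsto_const_nhds)
          (((crp.tendsto 0).comp l2).mul ((crp.tendsto D).comp l3)))
          ((crp.tendsto D).comp l3 |>.mul ((crp.tendsto D).comp l4)))
          (((l2.pow p).add tendsto_const_nhds).div_const 2)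
      have hgku0 : nndist (g u) (k u) = 0 := by rw [hgu, nndist_self]
      have hsimp : max (max (max (max (α * 0 ^ p) (β * nndist (g u) (k u) ^ p))
            ((0 : ℝ≥0) ^ ((p : ℝ) / 2) * D ^ ((p : ℝ) / 2)))
            (D ^ ((p : ℝ) / 2) * D ^ ((p : ℝ) / 2)))
            ((0 ^ p + nndist (g u) (k u) ^ p) / 2) = D ^ p := by
        rw [hgku0, rpow_half_mul_aux hp]
        simp [zero_pow hp.ne', NNReal.zero_rpow (by positivity : (p:ℝ)/2 ≠ 0)]
      rw [hsimp] at hmax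
      exact (tendsto_const_nhds.mul (l1.pow p)).add (tendsto_const_nhds.mul hmax)
    have H : D ^ p ≤ F (a * D ^ p + (1 - a) * D ^ p) :=
      usc_limit_aux hFusc larg l0 fun n => hineq (x n) u
    exact nndist_eq_zero.mp (key_aux ha1 hF hp H)
  -- Step 4: f t = g u, hence t = u and everything collapses
  have hfgu : f t = g u := point t u hft.symm hgu.symm
  have htu : t = u := by rw [htgu, ← hfgu, hftu]
  have hfix_f : f t = t := by rw [hftu, htu]
  have hfix_h : h t = t := by rw [← hft, hfix_f]
  have hfix_g : g t = t := by rw [htu] at htgu ⊢; exact htgu.symm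
  have hfix_k : k t = t := by rw [htu, ← hgu, ← htu, hfix_g]
  refine ⟨t, ⟨hfix_f, hfix_g, hfix_h, hfix_k⟩, ?_⟩
  rintro s ⟨hsf, hsg, hsh, hsk⟩
  have := point s t (by rw [hsh, hsf]) (by rw [hfix_k, hfix_g])
  rw [hsf, hfix_g] at this
  exact this
end

section
/- Let f and h be self-maps of a metric space (X,d) such that the pair (f,h) is subcompatible and subsequentially continuous with a common witnessing sequence. Let 0 < a < 1, α, β ∈ (0,1], p a positive integer, and F : ℝ₊ → ℝ₊ upper semicontinuous with F(t) < t for every t > 0. Suppose that for all x, y ∈ X: d(fx,fy)^p ≤ F( a·d(hx,hy)^p + (1−a)·max{ α·d(fx,hx)^p, β·d(fy,hy)^p, d(fx,hx)^{p/2}·d(fx,hy)^{p/2}, d(fx,hy)^{p/2}·d(hx,fy)^{p/2}, (d(fx,hx)^p + d(fy,hy)^p)/2 } ). Then f and h have a unique common fixed point. -/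
open Filter Topology NNReal

/-!
A coincidence point `t` of the pair (`f t = h t`, obtained from subcompatibility and
subsequential continuity) is compared, via the contractive inequality, with the points `xₙ`
of the witnessing sequence. In the limit the argument of `F` tends to `d(f t, t)^p`, so upper
semicontinuity gives `d(f t, t)^p ≤ F (d(f t, t)^p)`, forcing `f t = t`. The same comparison
of a second common fixed point with `t` (constant sequence) gives uniqueness.
-/

theorem UpperSemicontinuousAt.le_of_tendsto_of_le_comp {ι α β : Type*} [TopologicalSpace α]
    [LinearOrder β] [TopologicalSpace β] [OrderClosedTopology β] [DenselyOrdered β]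
    {F : α → β} {z : α} (hF : UpperSemicontinuousAt F z) {l : Filter ι} [l.NeBot]
    {u : ι → β} {v : ι → α} {L : β} (hu : Tendsto u l (𝓝 L)) (hv : Tendsto v l (𝓝 z))
    (huv : ∀ᶠ i in l, u i ≤ F (v i)) : L ≤ F z := by
  by_contra! hlt
  obtain ⟨y, hFy, hyL⟩ := exists_between hlt
  have hlt_y : ∀ᶠ i in l, u i ≤ y :=
    (huv.and (hv.eventually (hF y hFy))).mono fun _ hi => hi.1.trans hi.2.le
  exact hyL.not_ge (le_of_tendsto hu hlt_y)

/-- The argument of `F` in the contractive condition, as a function of the distances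
`d(hx, hy)`, `d(fx, hx)`, `d(fy, hy)`, `d(fx, hy)`, `d(hx, fy)`. -/
noncomputable def gregusBound (a α β : ℝ≥0) (p : ℕ) (dhh dfx dfy dfxhy dhxfy : ℝ≥0) : ℝ≥0 :=
  a * dhh ^ p + (1 - a) *
    max (max (max (max (α * dfx ^ p) (β * dfy ^ p))
      (dfx ^ ((p : ℝ) / 2) * dfxhy ^ ((p : ℝ) / 2)))
      (dfxhy ^ ((p : ℝ) / 2) * dhxfy ^ ((p : ℝ) / 2)))
      ((dfx ^ p + dfy ^ p) / 2)

section gregusBound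

variable {a α β : ℝ≥0} {p : ℕ}

theorem gregusBound_eq_pow (ha : a ≤ 1) (hp : p ≠ 0) (d : ℝ≥0) :
    gregusBound a α β p d 0 0 d d = d ^ p := by
  have hhalf : d ^ ((p : ℝ) / 2) * d ^ ((p : ℝ) / 2) = d ^ p := by
    rw [← NNReal.rpow_add' (by positivity), add_halves, NNReal.rpow_natCast]
  simp only [gregusBound, zero_pow hp, NNReal.zero_rpow (by positivity : (p : ℝ) / 2 ≠ 0),
    hhalf, mul_zero, zero_mul, max_self, add_zero, zero_div, zero_le, max_eq_left,
    max_eq_right]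
  rw [← add_mul, add_tsub_cancel_of_le ha, one_mul]

theorem Filter.Tendsto.gregusBound {ι : Type*} {l : Filter ι} {u₀ u₁ u₂ u₃ u₄ : ι → ℝ≥0}
    {c₀ c₁ c₂ c₃ c₄ : ℝ≥0} (h₀ : Tendsto u₀ l (𝓝 c₀)) (h₁ : Tendsto u₁ l (𝓝 c₁))
    (h₂ : Tendsto u₂ l (𝓝 c₂)) (h₃ : Tendsto u₃ l (𝓝 c₃)) (h₄ : Tendsto u₄ l (𝓝 c₄)) :
    Tendsto (fun i => gregusBound a α β p (u₀ i) (u₁ i) (u₂ i) (u₃ i) (u₄ i)) l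
      (𝓝 (gregusBound a α β p c₀ c₁ c₂ c₃ c₄)) := by
  have hrpow : ∀ {u : ι → ℝ≥0} {c : ℝ≥0}, Tendsto u l (𝓝 c) →
      Tendsto (fun i => u i ^ ((p : ℝ) / 2)) l (𝓝 (c ^ ((p : ℝ) / 2))) := fun hu =>
    ((NNReal.continuous_rpow_const (by positivity)).tendsto _).comp hu
  refine ((h₀.pow p).const_mul a).add (Tendsto.const_mul (1 - a) ?_)
  exact ((((h₁.pow p).const_mul α).max ((h₂.pow p).const_mul β)).max
    ((hrpow h₁).mul (hrpow h₃))).max ((hrpow h₃).mul (hrpow h₄)) |>.max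
    (((h₁.pow p).add (h₂.pow p)).div_const 2)

end gregusBound

theorem apply_eq_of_coincidence_of_tendsto {X ι : Type*} [MetricSpace X] {f h : X → X}
    {a α β : ℝ≥0} (ha : a ≤ 1) {p : ℕ} (hp : p ≠ 0) {F : ℝ≥0 → ℝ≥0}
    (hFusc : UpperSemicontinuous F) (hF : ∀ t : ℝ≥0, 0 < t → F t < t)
    (hineq : ∀ x y : X, nndist (f x) (f y) ^ p ≤
      F (gregusBound a α β p (nndist (h x) (h y)) (nndist (f x) (h x)) (nndist (f y) (h y))
        (nndist (f x) (h y)) (nndist (h x) (f y))))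
    {t s : X} (ht : f t = h t) {l : Filter ι} [l.NeBot] {x : ι → X}
    (hfx : Tendsto (fun i => f (x i)) l (𝓝 s)) (hhx : Tendsto (fun i => h (x i)) l (𝓝 s)) :
    f t = s := by
  set d := nndist (f t) s
  have hbound : Tendsto (fun i => gregusBound a α β p (nndist (h t) (h (x i)))
      (nndist (f t) (h t)) (nndist (f (x i)) (h (x i))) (nndist (f t) (h (x i)))
      (nndist (h t) (f (x i)))) l (𝓝 (d ^ p)) := by
    have hht_hx : Tendsto (fun i => nndist (h t) (h (x i))) l (𝓝 d) := by
      rw [← ht]; exact tendsto_const_nhds.nndist hhx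
    have hht_fx : Tendsto (fun i => nndist (h t) (f (x i))) l (𝓝 d) := by
      rw [← ht]; exact tendsto_const_nhds.nndist hfx
    have hfx_hx : Tendsto (fun i => nndist (f (x i)) (h (x i))) l (𝓝 0) := by
      simpa using hfx.nndist hhx
    have hft_ht : Tendsto (fun _ => nndist (f t) (h t)) l (𝓝 0) := by
      rw [ht, nndist_self]; exact tendsto_const_nhds
    have hft_hx : Tendsto (fun i => nndist (f t) (h (x i))) l (𝓝 d) :=
      tendsto_const_nhds.nndist hhx
    have hlim :=
      hht_hx.gregusBound (a := a) (α := α) (β := β) (p := p) hft_ht hfx_hx hft_hx hht_fx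
    rwa [gregusBound_eq_pow ha hp] at hlim
  have hle : d ^ p ≤ F (d ^ p) :=
    (hFusc.upperSemicontinuousAt _).le_of_tendsto_of_le_comp
      ((tendsto_const_nhds.nndist hfx).pow p) hbound (Eventually.of_forall fun i => hineq t (x i))
  have hd : d ^ p = 0 := by
    by_contra hne
    exact (hF _ (pos_iff_ne_zero.mpr hne)).not_ge hle
  exact eq_of_nndist_eq_zero (pow_eq_zero_iff hp |>.mp hd)

theorem common_fixed_point_gregus_two_maps_general {X : Type*} [MetricSpace X]
    (f h : X → X)
    (hfh : SubcompSubseqCont f h)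
    (a α β : ℝ≥0) (ha1 : a < 1)
    (p : ℕ) (hp : 0 < p)
    (F : ℝ≥0 → ℝ≥0) (hFusc : UpperSemicontinuous F)
    (hF : ∀ t : ℝ≥0, 0 < t → F t < t)
    (hineq : ∀ x y : X,
      nndist (f x) (f y) ^ p ≤
        F (a * nndist (h x) (h y) ^ p + (1 - a) *
          max (max (max (max (α * nndist (f x) (h x) ^ p)
            (β * nndist (f y) (h y) ^ p))
            (nndist (f x) (h x) ^ ((p : ℝ) / 2) * nndist (f x) (h y) ^ ((p : ℝ) / 2)))
            (nndist (f x) (h y) ^ ((p : ℝ) / 2) * nndist (h x) (f y) ^ ((p : ℝ) / 2)))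
            ((nndist (f x) (h x) ^ p + nndist (f y) (h y) ^ p) / 2))) :
    ∃! t : X, f t = t ∧ h t = t := by
  obtain ⟨x, t, hfx, hhx, hdist, hfhx, hhfx⟩ := hfh
  have hcoin : f t = h t := dist_eq_zero.mp (tendsto_nhds_unique (hfhx.dist hhfx) hdist)
  have hft : f t = t :=
    apply_eq_of_coincidence_of_tendsto ha1.le hp.ne' hFusc hF hineq hcoin hfx hhx
  have hht : h t = t := hcoin ▸ hft
  refine ⟨t, ⟨hft, hht⟩, fun u ⟨hfu, hhu⟩ => hfu.symm.trans ?_⟩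
  have hconst (g : X → X) (hg : g t = t) : Tendsto (fun _ : ℕ => g t) atTop (𝓝 t) := by
    rw [hg]; exact tendsto_const_nhds
  exact apply_eq_of_coincidence_of_tendsto ha1.le hp.ne' hFusc hF hineq (hfu.trans hhu.symm)
    (hconst f hft) (hconst h hht)

theorem common_fixed_point_gregus_two_maps {X : Type*} [MetricSpace X]
    (f h : X → X)
    (hfh : SubcompSubseqCont f h)
    (a α β : ℝ≥0) (ha0 : 0 < a) (ha1 : a < 1)
    (hα : 0 < α ∧ α ≤ 1) (hβ : 0 < β ∧ β ≤ 1)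
    (p : ℕ) (hp : 0 < p)
    (F : ℝ≥0 → ℝ≥0) (hFusc : UpperSemicontinuous F)
    (hF : ∀ t : ℝ≥0, 0 < t → F t < t)
    (hineq : ∀ x y : X,
      nndist (f x) (f y) ^ p ≤
        F (a * nndist (h x) (h y) ^ p + (1 - a) *
          max (max (max (max (α * nndist (f x) (h x) ^ p)
            (β * nndist (f y) (h y) ^ p))
            (nndist (f x) (h x) ^ ((p : ℝ) / 2) * nndist (f x) (h y) ^ ((p : ℝ) / 2)))
            (nndist (f x) (h y) ^ ((p : ℝ) / 2) * nndist (h x) (f y) ^ ((p : ℝ) / 2)))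
            ((nndist (f x) (h x) ^ p + nndist (f y) (h y) ^ p) / 2))) :
    ∃! t : X, f t = t ∧ h t = t :=
  common_fixed_point_gregus_two_maps_general f h hfh a α β ha1 p hp F hFusc hF hineq
end

section
/- Let h, k and a family {fₙ}_{n≥1} be self-maps of a metric space (X,d) such that for every n ≥ 1 the pairs (fₙ,h) and (f_{n+1},k) are each subcompatible and subsequentially continuous with a common witnessing sequence. Let 0 < a < 1, α, β ∈ (0,1], p a positive integer, and F : ℝ₊ → ℝ₊ upper semicontinuous with F(t) < t for every t > 0. Suppose that for every n ≥ 1 and all x, y ∈ X: d(fₙx, f_{n+1}y)^p ≤ F( a·d(hx,ky)^p + (1−a)·max{ α·d(fₙx,hx)^p, β·d(f_{n+1}y,ky)^p, d(fₙx,hx)^{p/2}·d(fₙx,ky)^{p/2}, d(fₙx,ky)^{p/2}·d(hx,f_{n+1}y)^{p/2}, (d(fₙx,hx)^p + d(f_{n+1}y,ky)^p)/2 } ). Then h, k and all the maps fₙ (n ≥ 1) have a unique common fixed point. -/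
open Filter Topology NNReal

/-! Each witnessing sequence yields a coincidence point, `f t = h t`. Passing to the limit in
the contractive condition along these sequences (this is where the upper semicontinuity of `F`
and `F s < s` enter) forces the coincidence points of `(f₁, h)` and `(f₂, k)` to be one common
fixed point `t` of `f₁, f₂, h, k`. If `fₙ t = t`, the condition at `x = y = t` reads
`D ≤ F((1 - a) max(β D, D/2))` for `D = d(t, fₙ₊₁ t)^p`, which is impossible unless `D = 0`. -/

theorem SubcompSubseqCont.exists_seq_apply_eq {X : Type*} [MetricSpace X] {f g : X → X}
    (hfg : SubcompSubseqCont f g) :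
    ∃ (x : ℕ → X) (t : X), Tendsto (fun n => f (x n)) atTop (𝓝 t) ∧
      Tendsto (fun n => g (x n)) atTop (𝓝 t) ∧ f t = g t := by
  obtain ⟨x, t, hf, hg, hdist, hfg, hgf⟩ := hfg
  exact ⟨x, t, hf, hg, dist_eq_zero.mp (tendsto_nhds_unique (hfg.dist hgf) hdist)⟩

theorem eq_zero_of_tendsto_of_le_apply {F : ℝ≥0 → ℝ≥0} (hFusc : UpperSemicontinuous F)
    (hF : ∀ t : ℝ≥0, 0 < t → F t < t) {ι : Type*} {l : Filter ι} [l.NeBot] {L A : ι → ℝ≥0}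
    {D : ℝ≥0} (hL : Tendsto L l (𝓝 D)) (hA : Tendsto A l (𝓝 D)) (hle : ∀ i, L i ≤ F (A i)) :
    D = 0 := by
  by_contra hD
  obtain ⟨y, hFy, hyD⟩ := exists_between (hF D (pos_iff_ne_zero.mpr hD))
  have hev : ∀ᶠ i in l, L i ≤ y :=
    (hA.eventually (hFusc D y hFy)).mono fun i hi => (hle i).trans hi.le
  exact (le_of_tendsto hL hev).not_gt hyD

section Gregus

variable {X : Type*} [MetricSpace X]

/-- The argument of `F` in the Greguš-type contractive condition, for the points
`fx = f x`, `hx = h x`, `gy = g y`, `ky = k y`. -/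
noncomputable def gregusArg (a α β : ℝ≥0) (p : ℕ) (fx hx gy ky : X) : ℝ≥0 :=
  a * nndist hx ky ^ p + (1 - a) *
    max (max (max (max (α * nndist fx hx ^ p) (β * nndist gy ky ^ p))
      (nndist fx hx ^ ((p : ℝ) / 2) * nndist fx ky ^ ((p : ℝ) / 2)))
      (nndist fx ky ^ ((p : ℝ) / 2) * nndist hx gy ^ ((p : ℝ) / 2)))
      ((nndist fx hx ^ p + nndist gy ky ^ p) / 2)

variable {a α β : ℝ≥0} {p : ℕ}

theorem continuous_gregusArg (a α β : ℝ≥0) (p : ℕ) :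
    Continuous fun q : X × X × X × X => gregusArg a α β p q.1 q.2.1 q.2.2.1 q.2.2.2 := by
  unfold gregusArg
  fun_prop (disch := positivity)

theorem gregusArg_self_self (ha : a ≤ 1) (hp : p ≠ 0) (z w : X) :
    gregusArg a α β p z z w w = nndist z w ^ p := by
  have hsq : nndist z w ^ ((p : ℝ) / 2) * nndist z w ^ ((p : ℝ) / 2) = nndist z w ^ p := by
    rw [← NNReal.rpow_add' (by positivity), add_halves, NNReal.rpow_natCast]
  simp [gregusArg, hp, hsq, ← add_mul, add_tsub_cancel_of_le ha]

theorem gregusArg_self_self_left (hp : p ≠ 0) (z w : X) :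
    gregusArg a α β p z z w z = (1 - a) * max (β * nndist w z ^ p) (nndist w z ^ p / 2) := by
  simp [gregusArg, hp]

variable {F : ℝ≥0 → ℝ≥0}

theorem eq_of_nndist_pow_le_gregusArg_self_self (hF : ∀ t : ℝ≥0, 0 < t → F t < t) (ha : a ≤ 1)
    (hp : p ≠ 0) {z w : X} (hle : nndist z w ^ p ≤ F (gregusArg a α β p z z w w)) : z = w := by
  by_contra hne
  rw [gregusArg_self_self ha hp] at hle
  exact (hF _ (pow_pos (pos_iff_ne_zero.mpr (mt nndist_eq_zero.mp hne)) p)).not_ge hle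

theorem eq_of_tendsto_of_nndist_pow_le_gregusArg (hFusc : UpperSemicontinuous F)
    (hF : ∀ t : ℝ≥0, 0 < t → F t < t) (ha : a ≤ 1) (hp : p ≠ 0) {ι : Type*} {l : Filter ι}
    [l.NeBot] {u₁ u₂ u₃ u₄ : ι → X} {z w : X} (h₁ : Tendsto u₁ l (𝓝 z))
    (h₂ : Tendsto u₂ l (𝓝 z)) (h₃ : Tendsto u₃ l (𝓝 w)) (h₄ : Tendsto u₄ l (𝓝 w))
    (hle : ∀ i, nndist (u₁ i) (u₃ i) ^ p ≤ F (gregusArg a α β p (u₁ i) (u₂ i) (u₃ i) (u₄ i))) :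
    z = w := by
  have hA : Tendsto (fun i => gregusArg a α β p (u₁ i) (u₂ i) (u₃ i) (u₄ i)) l
      (𝓝 (nndist z w ^ p)) := by
    have hcont := ((continuous_gregusArg (X := X) a α β p).tendsto (z, z, w, w)).comp
      (h₁.prodMk_nhds (h₂.prodMk_nhds (h₃.prodMk_nhds h₄)))
    rwa [gregusArg_self_self ha hp z w] at hcont
  have hD := eq_zero_of_tendsto_of_le_apply hFusc hF ((h₁.nndist h₃).pow p) hA hle
  exact nndist_eq_zero.mp ((pow_eq_zero_iff hp).mp hD)

theorem eq_of_nndist_pow_le_gregusArg_self_self_left (hF : ∀ t : ℝ≥0, 0 < t → F t < t)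
    (ha : a < 1) (hβ : β ≤ 1) (hp : p ≠ 0) {z w : X}
    (hle : nndist z w ^ p ≤ F (gregusArg a α β p z z w z)) : w = z := by
  by_contra hne
  rw [gregusArg_self_self_left hp, nndist_comm] at hle
  set D := nndist w z ^ p
  have hD : 0 < D := pow_pos (pos_iff_ne_zero.mpr (mt nndist_eq_zero.mp hne)) p
  have hA : 0 < (1 - a) * max (β * D) (D / 2) :=
    mul_pos (tsub_pos_of_lt ha) (lt_max_of_lt_right (half_pos hD))
  have hAD : (1 - a) * max (β * D) (D / 2) ≤ D :=
    calc (1 - a) * max (β * D) (D / 2) ≤ 1 * D :=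
          mul_le_mul' tsub_le_self (max_le (mul_le_of_le_one_left' hβ) (half_le_self D))
      _ = D := one_mul D
  exact ((hF _ hA).trans_le hAD).not_ge hle

theorem existsUnique_common_fixedPoint_of_gregus (hFusc : UpperSemicontinuous F)
    (hF : ∀ t : ℝ≥0, 0 < t → F t < t) (ha : a ≤ 1) (hp : p ≠ 0) {f g h k : X → X}
    (hfh : SubcompSubseqCont f h) (hgk : SubcompSubseqCont g k)
    (hle : ∀ x y, nndist (f x) (g y) ^ p ≤ F (gregusArg a α β p (f x) (h x) (g y) (k y))) :
    ∃! t, f t = t ∧ g t = t ∧ h t = t ∧ k t = t := by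
  obtain ⟨x, t, hfx, hhx, hft⟩ := hfh.exists_seq_apply_eq
  obtain ⟨y, s, hgy, hky, hgs⟩ := hgk.exists_seq_apply_eq
  have hhks : h t = k s :=
    eq_of_nndist_pow_le_gregusArg_self_self hF ha hp (by simpa only [hft, hgs] using hle t s)
  have htks : t = k s :=
    eq_of_tendsto_of_nndist_pow_le_gregusArg hFusc hF ha hp hfx hhx tendsto_const_nhds
      tendsto_const_nhds fun i => by simpa only [hgs] using hle (x i) s
  have hht : h t = t := hhks.trans htks.symm
  have hts : t = s :=
    eq_of_tendsto_of_nndist_pow_le_gregusArg hFusc hF ha hp tendsto_const_nhds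
      tendsto_const_nhds hgy hky fun i => by simpa only [hft, hht] using hle t (y i)
  subst hts
  refine ⟨t, ⟨hft.trans hht, hgs.trans htks.symm, hht, htks.symm⟩, ?_⟩
  rintro t' ⟨hft', -, hht', -⟩
  have hle' := hle t' t
  rw [hft', hht', hgs, ← htks] at hle'
  exact eq_of_nndist_pow_le_gregusArg_self_self hF ha hp hle'

end Gregus

theorem common_fixed_point_gregus_family_general {X : Type*} [MetricSpace X]
    (h k : X → X) (f : ℕ → X → X)
    (hfh : ∀ n : ℕ, 1 ≤ n → SubcompSubseqCont (f n) h)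
    (hfk : ∀ n : ℕ, 1 ≤ n → SubcompSubseqCont (f (n + 1)) k)
    (a α β : ℝ≥0) (ha1 : a < 1)
    (hβ : 0 < β ∧ β ≤ 1)
    (p : ℕ) (hp : 0 < p)
    (F : ℝ≥0 → ℝ≥0) (hFusc : UpperSemicontinuous F)
    (hF : ∀ t : ℝ≥0, 0 < t → F t < t)
    (hineq : ∀ n : ℕ, 1 ≤ n → ∀ x y : X,
      nndist (f n x) (f (n + 1) y) ^ p ≤
        F (a * nndist (h x) (k y) ^ p + (1 - a) *
          max (max (max (max (α * nndist (f n x) (h x) ^ p)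
            (β * nndist (f (n + 1) y) (k y) ^ p))
            (nndist (f n x) (h x) ^ ((p : ℝ) / 2) *
              nndist (f n x) (k y) ^ ((p : ℝ) / 2)))
            (nndist (f n x) (k y) ^ ((p : ℝ) / 2) *
              nndist (h x) (f (n + 1) y) ^ ((p : ℝ) / 2)))
            ((nndist (f n x) (h x) ^ p + nndist (f (n + 1) y) (k y) ^ p) / 2))) :
    ∃! t : X, h t = t ∧ k t = t ∧ ∀ n : ℕ, 1 ≤ n → f n t = t := by
  obtain ⟨t, ⟨hf₁, -, hht, hkt⟩, huniq⟩ :=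
    existsUnique_common_fixedPoint_of_gregus hFusc hF ha1.le hp.ne' (hfh 1 le_rfl)
      (hfk 1 le_rfl) (hineq 1 le_rfl)
  have hfix : ∀ n, 1 ≤ n → f n t = t := by
    intro n hn
    induction n, hn using Nat.le_induction with
    | base => exact hf₁
    | succ n hn ih =>
      have hle := hineq n hn t t
      rw [ih, hht, hkt] at hle
      exact eq_of_nndist_pow_le_gregusArg_self_self_left hF ha1 hβ.2 hp.ne' hle
  exact ⟨t, ⟨hht, hkt, hfix⟩, fun t' ⟨hht', hkt', hfix'⟩ =>
    huniq t' ⟨hfix' 1 le_rfl, hfix' 2 one_le_two, hht', hkt'⟩⟩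

theorem common_fixed_point_gregus_family {X : Type*} [MetricSpace X]
    (h k : X → X) (f : ℕ → X → X)
    (hfh : ∀ n : ℕ, 1 ≤ n → SubcompSubseqCont (f n) h)
    (hfk : ∀ n : ℕ, 1 ≤ n → SubcompSubseqCont (f (n + 1)) k)
    (a α β : ℝ≥0) (ha0 : 0 < a) (ha1 : a < 1)
    (hα : 0 < α ∧ α ≤ 1) (hβ : 0 < β ∧ β ≤ 1)
    (p : ℕ) (hp : 0 < p)
    (F : ℝ≥0 → ℝ≥0) (hFusc : UpperSemicontinuous F)
    (hF : ∀ t : ℝ≥0, 0 < t → F t < t)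
    (hineq : ∀ n : ℕ, 1 ≤ n → ∀ x y : X,
      nndist (f n x) (f (n + 1) y) ^ p ≤
        F (a * nndist (h x) (k y) ^ p + (1 - a) *
          max (max (max (max (α * nndist (f n x) (h x) ^ p)
            (β * nndist (f (n + 1) y) (k y) ^ p))
            (nndist (f n x) (h x) ^ ((p : ℝ) / 2) *
              nndist (f n x) (k y) ^ ((p : ℝ) / 2)))
            (nndist (f n x) (k y) ^ ((p : ℝ) / 2) *
              nndist (h x) (f (n + 1) y) ^ ((p : ℝ) / 2)))
            ((nndist (f n x) (h x) ^ p + nndist (f (n + 1) y) (k y) ^ p) / 2))) :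
    ∃! t : X, h t = t ∧ k t = t ∧ ∀ n : ℕ, 1 ≤ n → f n t = t :=
  common_fixed_point_gregus_family_general h k f hfh hfk a α β ha1 hβ p hp F hFusc hF hineq
end

section
/- Let X = [0,∞) with the usual metric, and define f, g : X → X by f(x) = x², and g(x) = x + 2 if x ∈ [0,4] ∪ (9,∞), g(x) = x + 12 if x ∈ (4,9]. Then the pair (f,g) is subcompatible (the sequence xₙ = 2 + 1/n is a witness), but f and g are not occasionally weakly compatible: there is no point x ∈ X with f(x) = g(x) and f(g(x)) = g(f(x)). -/
open Filter Topology NNReal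

/-!
Along `xₙ ↓ 2` we eventually have `xₙ ≤ 4` and `xₙ² ∈ (4, 9]`, so `g xₙ = xₙ + 2` and
`g (f xₙ) = xₙ² + 12`; both `f (g xₙ)` and `g (f xₙ)` therefore tend to `16`.
A coincidence point solves `x² = x + 2` (so `x = 2`) or `x² = x + 12` with `x ∈ (4, 9]`
(impossible), and at `x = 2` we get `f (g 2) = 16 ≠ 6 = g (f 2)`.
-/

namespace NNReal

theorem sq_eq_add_two_iff {x : ℝ≥0} : x ^ 2 = x + 2 ↔ x = 2 := by
  refine ⟨fun h => ?_, fun h => by subst h; norm_num⟩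
  have h' : (x : ℝ) ^ 2 = x + 2 := by exact_mod_cast h
  have hx : (0 : ℝ) ≤ x := x.coe_nonneg
  have : ((x : ℝ) - 2) * (x + 1) = 0 := by linear_combination h'
  exact_mod_cast (by nlinarith : (x : ℝ) = 2)

theorem sq_ne_add_twelve_of_four_lt {x : ℝ≥0} (hx : 4 < x) : x ^ 2 ≠ x + 12 := by
  intro h
  have h' : (x : ℝ) ^ 2 = x + 12 := by exact_mod_cast h
  have hx' : (4 : ℝ) < x := by exact_mod_cast hx
  nlinarith

end NNReal

theorem tendsto_two_add_one_div_nat_succ_nhdsGT :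
    Tendsto (fun n : ℕ => 2 + 1 / (n + 1 : ℝ≥0)) atTop (𝓝[>] 2) := by
  refine tendsto_nhdsWithin_iff.mpr ⟨?_, .of_forall fun n => by simp⟩
  simpa using tendsto_const_nhds.add (tendsto_one_div_add_atTop_nhds_zero_nat (𝕜 := ℝ≥0))

theorem eq_two_of_apply_eq_apply {f g : ℝ≥0 → ℝ≥0} (hf : ∀ x : ℝ≥0, f x = x ^ 2)
    (hg1 : ∀ x : ℝ≥0, x ≤ 4 ∨ 9 < x → g x = x + 2)
    (hg2 : ∀ x : ℝ≥0, 4 < x → x ≤ 9 → g x = x + 12) {x : ℝ≥0} (h : f x = g x) : x = 2 := by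
  rw [hf] at h
  rcases le_or_gt x 4 with hx4 | hx4
  · exact NNReal.sq_eq_add_two_iff.mp (h.trans (hg1 x (.inl hx4)))
  rcases le_or_gt x 9 with hx9 | hx9
  · exact absurd (h.trans (hg2 x hx4 hx9)) (NNReal.sq_ne_add_twelve_of_four_lt hx4)
  · exact NNReal.sq_eq_add_two_iff.mp (h.trans (hg1 x (.inr hx9)))

theorem subcompatible_of_tendsto_nhdsGT_two {f g : ℝ≥0 → ℝ≥0} (hf : ∀ x : ℝ≥0, f x = x ^ 2)
    (hg1 : ∀ x : ℝ≥0, x ≤ 4 ∨ 9 < x → g x = x + 2)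
    (hg2 : ∀ x : ℝ≥0, 4 < x → x ≤ 9 → g x = x + 12) {s : ℕ → ℝ≥0}
    (hs : Tendsto s atTop (𝓝[>] 2)) :
    Tendsto (fun n => f (s n)) atTop (𝓝 4) ∧ Tendsto (fun n => g (s n)) atTop (𝓝 4) ∧
      Tendsto (fun n => dist (f (g (s n))) (g (f (s n)))) atTop (𝓝 0) := by
  have hs2 : Tendsto s atTop (𝓝 2) := hs.mono_right nhdsWithin_le_nhds
  have hmem : ∀ᶠ n in atTop, s n ∈ Set.Ioo (2 : ℝ≥0) 3 := hs (Ioo_mem_nhdsGT (by norm_num))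
  have hgs : (fun n => g (s n)) =ᶠ[atTop] fun n => s n + 2 :=
    hmem.mono fun n hn => hg1 _ (Or.inl (hn.2.le.trans (by norm_num)))
  have hgfs : (fun n => g (f (s n))) =ᶠ[atTop] fun n => s n ^ 2 + 12 := by
    refine hmem.mono fun n hn => ?_
    have h4 : (4 : ℝ≥0) < s n ^ 2 := calc
      (4 : ℝ≥0) = 2 ^ 2 := by norm_num
      _ < s n ^ 2 := pow_lt_pow_left₀ hn.1 zero_le_two two_ne_zero
    have h9 : s n ^ 2 ≤ 9 := calc
      s n ^ 2 ≤ 3 ^ 2 := pow_le_pow_left₀ zero_le hn.2.le 2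
      _ = 9 := by norm_num
    simp only [hf, hg2 _ h4 h9]
  have hf4 : Tendsto (fun n => f (s n)) atTop (𝓝 4) := by
    simp only [hf]
    convert hs2.pow 2
    norm_num
  have hg4 : Tendsto (fun n => g (s n)) atTop (𝓝 4) := by
    refine Tendsto.congr' hgs.symm ?_
    convert hs2.add_const 2
    norm_num
  have hfg : Tendsto (fun n => f (g (s n))) atTop (𝓝 16) := by
    simp only [hf]
    convert hg4.pow 2
    norm_num
  have hgf : Tendsto (fun n => g (f (s n))) atTop (𝓝 16) := by
    refine Tendsto.congr' hgfs.symm ?_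
    convert (hs2.pow 2).add_const 12
    norm_num
  refine ⟨hf4, hg4, ?_⟩
  rw [← dist_self (16 : ℝ≥0)]
  exact hfg.dist hgf

/-- On `X = [0,∞)` (modelled as `ℝ≥0` with its usual metric), with
`f x = x²` and `g x = x + 2` on `[0,4] ∪ (9,∞)`, `g x = x + 12` on `(4,9]`,
the pair `(f, g)` is subcompatible — the sequence `xₙ = 2 + 1/n` (here
indexed as `2 + 1/(n+1)`) witnesses this with limit `t = 4` — but `f` and `g`
are not occasionally weakly compatible. -/
theorem subcompatible_not_owc
    (f g : ℝ≥0 → ℝ≥0)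
    (hf : ∀ x : ℝ≥0, f x = x ^ 2)
    (hg1 : ∀ x : ℝ≥0, x ≤ 4 ∨ 9 < x → g x = x + 2)
    (hg2 : ∀ x : ℝ≥0, 4 < x → x ≤ 9 → g x = x + 12) :
    (Tendsto (fun n : ℕ => f (2 + 1 / (n + 1 : ℝ≥0))) atTop (𝓝 (4 : ℝ≥0)) ∧
     Tendsto (fun n : ℕ => g (2 + 1 / (n + 1 : ℝ≥0))) atTop (𝓝 (4 : ℝ≥0)) ∧
     Tendsto (fun n : ℕ =>
       dist (f (g (2 + 1 / (n + 1 : ℝ≥0)))) (g (f (2 + 1 / (n + 1 : ℝ≥0)))))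
       atTop (𝓝 (0 : ℝ))) ∧
    ¬ ∃ x : ℝ≥0, f x = g x ∧ f (g x) = g (f x) := by
  refine ⟨subcompatible_of_tendsto_nhdsGT_two hf hg1 hg2
    tendsto_two_add_one_div_nat_succ_nhdsGT, ?_⟩
  rintro ⟨x, hfx, hcomm⟩
  obtain rfl := eq_two_of_apply_eq_apply hf hg1 hg2 hfx
  rw [hg1 2 (by norm_num), hf, hf, show (2 : ℝ≥0) ^ 2 = 4 by norm_num,
    hg1 4 (by norm_num)] at hcomm
  norm_num at hcomm
end
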